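/- Fix an integer N ≥ 2 and let i denote the imaginary unit. Let R be an associative unital ℂ-algebra containing elements p_1,…,p_N and invertible elements a_1,…,a_N such that all p_m commute with each other, all a_m and a_m^{-1} commute with each other, [p_m, a_k] = −i·δ_{mk}·a_k for all m,k, and elements with distinct indices commute. For u ∈ ℂ let L_m(u) be the 2×2 matrix over R with rows (u·1 − p_m, −a_m) and (a_m^{-1}, 0), and let T_N(u) = L_N(u)·L_{N−1}(u)⋯L_1(u). Then the monodromy matrix satisfies the RTT relation: T_N²(v)·T_N¹(u)·R(u−v) = R(u−v)·T_N¹(u)·T_N²(v) for all u, v ∈ ℂ, where M¹ = M ⊗ I, M² = I ⊗ M (4×4 Kronecker products) and R(u) = u·Id_4 − i·P with P the flip matrix on ℂ²⊗ℂ². -/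
import Mathlib

set_option maxHeartbeats 1000000

noncomputable section

open Matrix Kronecker

/-- The permutation (flip) matrix `P` on `ℂ² ⊗ ℂ²`. -/
def Pflip : Matrix (Fin 2 × Fin 2) (Fin 2 × Fin 2) ℂ :=
  Matrix.of fun p q => if p.1 = q.2 ∧ p.2 = q.1 then 1 else 0

/-- The rational R-matrix `R(u) = u·Id₄ − i·P`. -/
def Rmat (u : ℂ) : Matrix (Fin 2 × Fin 2) (Fin 2 × Fin 2) ℂ :=
  u • (1 : Matrix (Fin 2 × Fin 2) (Fin 2 × Fin 2) ℂ) - Complex.I • Pflip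

/-- The monodromy matrix `T_N(u) = L_N(u)·L_{N−1}(u)⋯L_1(u)` built from the local
Lax matrices. -/
def monodromy {R : Type*} [Ring R] {N : ℕ}
    (L : Fin N → ℂ → Matrix (Fin 2) (Fin 2) R) (u : ℂ) : Matrix (Fin 2) (Fin 2) R :=
  ((List.ofFn fun m : Fin N => L m u).reverse).prod

section Helpers

variable {R : Type*} [Ring R]

lemma kronMul_entry (A B : Matrix (Fin 2) (Fin 2) R) (i j k l : Fin 2) :
    (((1 : Matrix (Fin 2) (Fin 2) R) ⊗ₖ B) * (A ⊗ₖ (1 : Matrix (Fin 2) (Fin 2) R))) (i,j) (k,l)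
      = B j l * A i k := by
  simp [Matrix.mul_apply, Matrix.kroneckerMap_apply, Matrix.one_apply,
    Fintype.sum_prod_type, Finset.sum_ite_eq, ite_mul, mul_ite]

lemma kronMul_entry' (A B : Matrix (Fin 2) (Fin 2) R) (i j k l : Fin 2) :
    ((A ⊗ₖ (1 : Matrix (Fin 2) (Fin 2) R)) * ((1 : Matrix (Fin 2) (Fin 2) R) ⊗ₖ B)) (i,j) (k,l)
      = A i k * B j l := by
  simp [Matrix.mul_apply, Matrix.kroneckerMap_apply, Matrix.one_apply,
    Fintype.sum_prod_type, Finset.sum_ite_eq, ite_mul, mul_ite]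

lemma kronL_mul (A B : Matrix (Fin 2) (Fin 2) R) :
    (A * B) ⊗ₖ (1 : Matrix (Fin 2) (Fin 2) R)
      = (A ⊗ₖ (1 : Matrix (Fin 2) (Fin 2) R)) * (B ⊗ₖ (1 : Matrix (Fin 2) (Fin 2) R)) := by
  ext ⟨i,j⟩ ⟨k,l⟩
  simp [Matrix.mul_apply, Matrix.kroneckerMap_apply, Matrix.one_apply,
    Fintype.sum_prod_type, Finset.sum_ite_eq, ite_mul, mul_ite, Finset.mul_sum, Finset.sum_mul]

lemma kronR_mul (A B : Matrix (Fin 2) (Fin 2) R) :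
    (1 : Matrix (Fin 2) (Fin 2) R) ⊗ₖ (A * B)
      = ((1 : Matrix (Fin 2) (Fin 2) R) ⊗ₖ A) * ((1 : Matrix (Fin 2) (Fin 2) R) ⊗ₖ B) := by
  ext ⟨i,j⟩ ⟨k,l⟩
  simp [Matrix.mul_apply, Matrix.kroneckerMap_apply, Matrix.one_apply,
    Fintype.sum_prod_type, Finset.sum_ite_eq, ite_mul, mul_ite, Finset.mul_sum, Finset.sum_mul]

lemma mul_Rmap_entry [Algebra ℂ R] (M4 : Matrix (Fin 2 × Fin 2) (Fin 2 × Fin 2) R) (w : ℂ)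
    (x y : Fin 2 × Fin 2) :
    (M4 * (Rmat w).map (algebraMap ℂ R)) x y
      = M4 x y * algebraMap ℂ R w - M4 x (y.2, y.1) * algebraMap ℂ R Complex.I := by
  obtain ⟨x1, x2⟩ := x; obtain ⟨y1, y2⟩ := y
  fin_cases x1 <;> fin_cases x2 <;> fin_cases y1 <;> fin_cases y2 <;>
  simp [Rmat, Pflip, Matrix.mul_apply, Matrix.map_apply, Matrix.sub_apply, Matrix.smul_apply,
    Matrix.one_apply, smul_eq_mul, mul_ite, ite_mul, mul_sub, Prod.ext_iff,
    Finset.sum_ite_eq, Finset.sum_sub_distrib, Fintype.sum_prod_type]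

lemma Rmap_mul_entry [Algebra ℂ R] (M4 : Matrix (Fin 2 × Fin 2) (Fin 2 × Fin 2) R) (w : ℂ)
    (x y : Fin 2 × Fin 2) :
    ((Rmat w).map (algebraMap ℂ R) * M4) x y
      = algebraMap ℂ R w * M4 x y - algebraMap ℂ R Complex.I * M4 (x.2, x.1) y := by
  obtain ⟨x1, x2⟩ := x; obtain ⟨y1, y2⟩ := y
  fin_cases x1 <;> fin_cases x2 <;> fin_cases y1 <;> fin_cases y2 <;>
  simp [Rmat, Pflip, Matrix.mul_apply, Matrix.map_apply, Matrix.sub_apply, Matrix.smul_apply,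
    Matrix.one_apply, smul_eq_mul, mul_ite, ite_mul, sub_mul, Prod.ext_iff,
    Finset.sum_ite_eq, Finset.sum_sub_distrib, Fintype.sum_prod_type]

lemma RLL_of_entries [Algebra ℂ R] (X Y : Matrix (Fin 2) (Fin 2) R) (w : ℂ)
    (h : ∀ i j k l : Fin 2,
      Y j l * X i k * algebraMap ℂ R w - Y j k * X i l * algebraMap ℂ R Complex.I
        = algebraMap ℂ R w * (X i k * Y j l) - algebraMap ℂ R Complex.I * (X j k * Y i l)) :
    ((1 : Matrix (Fin 2) (Fin 2) R) ⊗ₖ Y) * (X ⊗ₖ (1 : Matrix (Fin 2) (Fin 2) R)) *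
        (Rmat w).map (algebraMap ℂ R)
      = (Rmat w).map (algebraMap ℂ R) * (X ⊗ₖ (1 : Matrix (Fin 2) (Fin 2) R)) *
        ((1 : Matrix (Fin 2) (Fin 2) R) ⊗ₖ Y) := by
  rw [mul_assoc _ _ (((1 : Matrix (Fin 2) (Fin 2) R) ⊗ₖ Y))]
  ext ⟨i, j⟩ ⟨k, l⟩
  rw [mul_Rmap_entry, Rmap_mul_entry, kronMul_entry, kronMul_entry, kronMul_entry',
    kronMul_entry']
  exact h i j k l

lemma cross_comm (A B : Matrix (Fin 2) (Fin 2) R)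
    (h : ∀ i j k l, B i j * A k l = A k l * B i j) :
    ((1 : Matrix (Fin 2) (Fin 2) R) ⊗ₖ B) * (A ⊗ₖ (1 : Matrix (Fin 2) (Fin 2) R))
      = (A ⊗ₖ (1 : Matrix (Fin 2) (Fin 2) R)) * ((1 : Matrix (Fin 2) (Fin 2) R) ⊗ₖ B) := by
  ext ⟨i, j⟩ ⟨k, l⟩
  rw [kronMul_entry, kronMul_entry']
  exact h j l i k

lemma cross_prod_left (B : Matrix (Fin 2) (Fin 2) R) (ms : List (Matrix (Fin 2) (Fin 2) R))
    (h : ∀ A ∈ ms, ((1 : Matrix (Fin 2) (Fin 2) R) ⊗ₖ B) * (A ⊗ₖ (1 : Matrix (Fin 2) (Fin 2) R))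
      = (A ⊗ₖ (1 : Matrix (Fin 2) (Fin 2) R)) * ((1 : Matrix (Fin 2) (Fin 2) R) ⊗ₖ B)) :
    ((1 : Matrix (Fin 2) (Fin 2) R) ⊗ₖ B) * (ms.prod ⊗ₖ (1 : Matrix (Fin 2) (Fin 2) R))
      = (ms.prod ⊗ₖ (1 : Matrix (Fin 2) (Fin 2) R)) * ((1 : Matrix (Fin 2) (Fin 2) R) ⊗ₖ B) := by
  induction ms with
  | nil => simp [Matrix.one_kronecker_one]
  | cons A ms ih =>
      simp only [List.prod_cons, kronL_mul]
      rw [← mul_assoc, h A (by simp), mul_assoc, ih (fun A hA => h A (by simp [hA])), ← mul_assoc]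

lemma cross_prod_right (A : Matrix (Fin 2) (Fin 2) R) (ms : List (Matrix (Fin 2) (Fin 2) R))
    (h : ∀ B ∈ ms, ((1 : Matrix (Fin 2) (Fin 2) R) ⊗ₖ B) * (A ⊗ₖ (1 : Matrix (Fin 2) (Fin 2) R))
      = (A ⊗ₖ (1 : Matrix (Fin 2) (Fin 2) R)) * ((1 : Matrix (Fin 2) (Fin 2) R) ⊗ₖ B)) :
    ((1 : Matrix (Fin 2) (Fin 2) R) ⊗ₖ ms.prod) * (A ⊗ₖ (1 : Matrix (Fin 2) (Fin 2) R))
      = (A ⊗ₖ (1 : Matrix (Fin 2) (Fin 2) R)) * ((1 : Matrix (Fin 2) (Fin 2) R) ⊗ₖ ms.prod) := by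
  induction ms with
  | nil => simp [Matrix.one_kronecker_one]
  | cons B ms ih =>
      simp only [List.prod_cons, kronR_mul]
      rw [mul_assoc, ih (fun B hB => h B (by simp [hB])), ← mul_assoc, h B (by simp), mul_assoc]

lemma RTT_list [Algebra ℂ R] (w : ℂ)
    (l : List (Matrix (Fin 2) (Fin 2) R × Matrix (Fin 2) (Fin 2) R))
    (hRLL : ∀ x ∈ l,
      ((1 : Matrix (Fin 2) (Fin 2) R) ⊗ₖ x.2) * (x.1 ⊗ₖ (1 : Matrix (Fin 2) (Fin 2) R)) *
          (Rmat w).map (algebraMap ℂ R)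
        = (Rmat w).map (algebraMap ℂ R) * (x.1 ⊗ₖ (1 : Matrix (Fin 2) (Fin 2) R)) *
          ((1 : Matrix (Fin 2) (Fin 2) R) ⊗ₖ x.2))
    (hcross : l.Pairwise fun x y =>
      (((1 : Matrix (Fin 2) (Fin 2) R) ⊗ₖ x.2) * (y.1 ⊗ₖ (1 : Matrix (Fin 2) (Fin 2) R))
          = (y.1 ⊗ₖ (1 : Matrix (Fin 2) (Fin 2) R)) * ((1 : Matrix (Fin 2) (Fin 2) R) ⊗ₖ x.2)) ∧
      (((1 : Matrix (Fin 2) (Fin 2) R) ⊗ₖ y.2) * (x.1 ⊗ₖ (1 : Matrix (Fin 2) (Fin 2) R))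
          = (x.1 ⊗ₖ (1 : Matrix (Fin 2) (Fin 2) R)) * ((1 : Matrix (Fin 2) (Fin 2) R) ⊗ₖ y.2))) :
    ((1 : Matrix (Fin 2) (Fin 2) R) ⊗ₖ ((l.map Prod.snd).reverse.prod)) *
        (((l.map Prod.fst).reverse.prod) ⊗ₖ (1 : Matrix (Fin 2) (Fin 2) R)) *
        (Rmat w).map (algebraMap ℂ R)
      = (Rmat w).map (algebraMap ℂ R) *
        (((l.map Prod.fst).reverse.prod) ⊗ₖ (1 : Matrix (Fin 2) (Fin 2) R)) *
        ((1 : Matrix (Fin 2) (Fin 2) R) ⊗ₖ ((l.map Prod.snd).reverse.prod)) := by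
  induction l with
  | nil => simp [Matrix.one_kronecker_one]
  | cons x l ih =>
      rw [List.pairwise_cons] at hcross
      obtain ⟨hx, hl⟩ := hcross
      have ih' := ih (fun y hy => hRLL y (by simp [hy])) hl
      have hRx := hRLL x (by simp)
      set Tu := (l.map Prod.fst).reverse.prod with hTu
      set Tv := (l.map Prod.snd).reverse.prod with hTv
      have c1 : ((1 : Matrix (Fin 2) (Fin 2) R) ⊗ₖ x.2) *
            (Tu ⊗ₖ (1 : Matrix (Fin 2) (Fin 2) R))
          = (Tu ⊗ₖ (1 : Matrix (Fin 2) (Fin 2) R)) * ((1 : Matrix (Fin 2) (Fin 2) R) ⊗ₖ x.2) := by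
        apply cross_prod_left
        intro A hA
        rw [List.mem_reverse, List.mem_map] at hA
        obtain ⟨y, hy, rfl⟩ := hA
        exact (hx y hy).1
      have c2 : ((1 : Matrix (Fin 2) (Fin 2) R) ⊗ₖ Tv) *
            (x.1 ⊗ₖ (1 : Matrix (Fin 2) (Fin 2) R))
          = (x.1 ⊗ₖ (1 : Matrix (Fin 2) (Fin 2) R)) * ((1 : Matrix (Fin 2) (Fin 2) R) ⊗ₖ Tv) := by
        apply cross_prod_right
        intro B hB
        rw [List.mem_reverse, List.mem_map] at hB
        obtain ⟨y, hy, rfl⟩ := hB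
        exact (hx y hy).2
      simp only [List.map_cons, List.reverse_cons, List.prod_append, List.prod_cons,
        List.prod_nil, mul_one, ← hTu, ← hTv, kronL_mul, kronR_mul]
      calc ((1:Matrix (Fin 2) (Fin 2) R) ⊗ₖ Tv) * ((1:Matrix (Fin 2) (Fin 2) R) ⊗ₖ x.2) *
            ((Tu ⊗ₖ (1:Matrix (Fin 2) (Fin 2) R)) * (x.1 ⊗ₖ (1:Matrix (Fin 2) (Fin 2) R))) *
            (Rmat w).map (algebraMap ℂ R)
          = ((1:Matrix (Fin 2) (Fin 2) R) ⊗ₖ Tv) * (Tu ⊗ₖ (1:Matrix (Fin 2) (Fin 2) R)) *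
            (((1:Matrix (Fin 2) (Fin 2) R) ⊗ₖ x.2) * (x.1 ⊗ₖ (1:Matrix (Fin 2) (Fin 2) R)) *
              (Rmat w).map (algebraMap ℂ R)) := by
            rw [mul_assoc ((1:Matrix (Fin 2) (Fin 2) R) ⊗ₖ Tv), ← mul_assoc
              ((1:Matrix (Fin 2) (Fin 2) R) ⊗ₖ x.2), c1]
            noncomm_ring
        _ = ((1:Matrix (Fin 2) (Fin 2) R) ⊗ₖ Tv) * (Tu ⊗ₖ (1:Matrix (Fin 2) (Fin 2) R)) *
            (Rmat w).map (algebraMap ℂ R) *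
            ((x.1 ⊗ₖ (1:Matrix (Fin 2) (Fin 2) R)) * ((1:Matrix (Fin 2) (Fin 2) R) ⊗ₖ x.2)) := by
            rw [hRx]; noncomm_ring
        _ = (Rmat w).map (algebraMap ℂ R) *
            ((Tu ⊗ₖ (1:Matrix (Fin 2) (Fin 2) R)) * (((1:Matrix (Fin 2) (Fin 2) R) ⊗ₖ Tv) *
              (x.1 ⊗ₖ (1:Matrix (Fin 2) (Fin 2) R))) * ((1:Matrix (Fin 2) (Fin 2) R) ⊗ₖ x.2)) := by
            rw [ih']; noncomm_ring
        _ = (Rmat w).map (algebraMap ℂ R) *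
            ((Tu ⊗ₖ (1:Matrix (Fin 2) (Fin 2) R)) * (x.1 ⊗ₖ (1:Matrix (Fin 2) (Fin 2) R))) *
            (((1:Matrix (Fin 2) (Fin 2) R) ⊗ₖ Tv) * ((1:Matrix (Fin 2) (Fin 2) R) ⊗ₖ x.2)) := by
            rw [c2]; noncomm_ring

/-- The sixteen scalar entry identities underlying the local RLL relation. -/
lemma local_entries [Algebra ℂ R] (P A B : R) (u v : ℂ)
    (hAB : A * B = 1) (hBA : B * A = 1)
    (hPA : P * A - A * P = -(algebraMap ℂ R Complex.I) * A) :
    ∀ i j k l : Fin 2,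
      (!![algebraMap ℂ R v - P, -A; B, 0] : Matrix (Fin 2) (Fin 2) R) j l *
          !![algebraMap ℂ R u - P, -A; B, 0] i k * algebraMap ℂ R (u - v) -
        !![algebraMap ℂ R v - P, -A; B, 0] j k *
          !![algebraMap ℂ R u - P, -A; B, 0] i l * algebraMap ℂ R Complex.I
      = algebraMap ℂ R (u - v) *
          (!![algebraMap ℂ R u - P, -A; B, 0] i k *
            !![algebraMap ℂ R v - P, -A; B, 0] j l) -
        algebraMap ℂ R Complex.I *
          (!![algebraMap ℂ R u - P, -A; B, 0] j k *
            !![algebraMap ℂ R v - P, -A; B, 0] i l) := by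
  have sP : ∀ c : ℂ, P * algebraMap ℂ R c = algebraMap ℂ R c * P :=
    fun c => (Algebra.commutes c P).symm
  have sP' : ∀ (c : ℂ) (x : R), P * (algebraMap ℂ R c * x) = algebraMap ℂ R c * (P * x) := by
    intro c x; rw [← mul_assoc, sP, mul_assoc]
  have sA : ∀ c : ℂ, A * algebraMap ℂ R c = algebraMap ℂ R c * A :=
    fun c => (Algebra.commutes c A).symm
  have sA' : ∀ (c : ℂ) (x : R), A * (algebraMap ℂ R c * x) = algebraMap ℂ R c * (A * x) := by
    intro c x; rw [← mul_assoc, sA, mul_assoc]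
  have sB : ∀ c : ℂ, B * algebraMap ℂ R c = algebraMap ℂ R c * B :=
    fun c => (Algebra.commutes c B).symm
  have sB' : ∀ (c : ℂ) (x : R), B * (algebraMap ℂ R c * x) = algebraMap ℂ R c * (B * x) := by
    intro c x; rw [← mul_assoc, sB, mul_assoc]
  have tvu : algebraMap ℂ R v * algebraMap ℂ R u = algebraMap ℂ R u * algebraMap ℂ R v := by
    rw [← _root_.map_mul, ← _root_.map_mul, mul_comm]
  have tvu' : ∀ x : R, algebraMap ℂ R v * (algebraMap ℂ R u * x)
      = algebraMap ℂ R u * (algebraMap ℂ R v * x) := by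
    intro x; rw [← mul_assoc, tvu, mul_assoc]
  have tIu : algebraMap ℂ R Complex.I * algebraMap ℂ R u
      = algebraMap ℂ R u * algebraMap ℂ R Complex.I := by
    rw [← _root_.map_mul, ← _root_.map_mul, mul_comm]
  have tIu' : ∀ x : R, algebraMap ℂ R Complex.I * (algebraMap ℂ R u * x)
      = algebraMap ℂ R u * (algebraMap ℂ R Complex.I * x) := by
    intro x; rw [← mul_assoc, tIu, mul_assoc]
  have tIv : algebraMap ℂ R Complex.I * algebraMap ℂ R v
      = algebraMap ℂ R v * algebraMap ℂ R Complex.I := by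
    rw [← _root_.map_mul, ← _root_.map_mul, mul_comm]
  have tIv' : ∀ x : R, algebraMap ℂ R Complex.I * (algebraMap ℂ R v * x)
      = algebraMap ℂ R v * (algebraMap ℂ R Complex.I * x) := by
    intro x; rw [← mul_assoc, tIv, mul_assoc]
  have rPA : P * A = A * P - algebraMap ℂ R Complex.I * A := by
    rw [sub_eq_iff_eq_add] at hPA
    rw [hPA]; noncomm_ring
  have rPA' : ∀ x : R, P * (A * x) = A * (P * x) - algebraMap ℂ R Complex.I * (A * x) := by
    intro x; rw [← mul_assoc, rPA]; noncomm_ring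
  have rPB : P * B = B * P + algebraMap ℂ R Complex.I * B := by
    have h1 : B * (P * A) * B = B * (A * P - algebraMap ℂ R Complex.I * A) * B := by rw [rPA]
    have h2 : B * (P * A) * B = B * P := by
      calc B * (P * A) * B = B * P * (A * B) := by noncomm_ring
        _ = B * P := by rw [hAB, mul_one]
    have h3 : B * (A * P - algebraMap ℂ R Complex.I * A) * B
        = P * B - algebraMap ℂ R Complex.I * B := by
      calc B * (A * P - algebraMap ℂ R Complex.I * A) * B
          = (B * A) * (P * B) - (B * (algebraMap ℂ R Complex.I * A)) * B := by noncomm_ring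
        _ = (B * A) * (P * B) - (algebraMap ℂ R Complex.I * (B * A)) * B := by rw [sB']
        _ = P * B - algebraMap ℂ R Complex.I * B := by rw [hBA]; noncomm_ring
    rw [h2, h3] at h1
    rw [h1]; noncomm_ring
  have rPB' : ∀ x : R, P * (B * x) = B * (P * x) + algebraMap ℂ R Complex.I * (B * x) := by
    intro x; rw [← mul_assoc, rPB]; noncomm_ring
  have hAB' : ∀ x : R, A * (B * x) = x := by intro x; rw [← mul_assoc, hAB, one_mul]
  have hBA' : ∀ x : R, B * (A * x) = x := by intro x; rw [← mul_assoc, hBA, one_mul]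
  have hw : algebraMap ℂ R (u - v) = algebraMap ℂ R u - algebraMap ℂ R v := map_sub _ _ _
  simp only [Fin.forall_fin_two, Matrix.of_apply, Matrix.cons_val', Matrix.cons_val_zero,
    Matrix.cons_val_one, Matrix.head_cons, Matrix.empty_val', Matrix.cons_val_fin_one,
    Matrix.head_fin_const, Fin.isValue]
  and_intros <;>
    simp only [hw, sub_mul, mul_sub, add_mul, mul_add, neg_mul, mul_neg, neg_neg, neg_sub,
      zero_mul, mul_zero, sub_zero, zero_sub, mul_one, one_mul, mul_assoc,
      rPA, rPA', rPB, rPB', hAB, hBA, hAB', hBA',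
      sP, sP', sA, sA', sB, sB', tvu, tvu', tIu, tIu', tIv, tIv'] <;>
    first | rfl | abel

end Helpers

/-- The Toda monodromy matrix satisfies the RTT relation with the rational R-matrix. -/
theorem toda_monodromy_satisfies_RTT
    (N : ℕ) (hN : 2 ≤ N)
    (R : Type*) [Ring R] [Algebra ℂ R] (p : Fin N → R) (a : Fin N → Rˣ)
    (hpp : ∀ m k, p m * p k = p k * p m)
    (haa : ∀ m k, (a m : R) * (a k : R) = (a k : R) * (a m : R))
    (haainv : ∀ m k, (a m : R) * (((a k)⁻¹ : Rˣ) : R) = (((a k)⁻¹ : Rˣ) : R) * (a m : R))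
    (hainvinv : ∀ m k, (((a m)⁻¹ : Rˣ) : R) * (((a k)⁻¹ : Rˣ) : R)
        = (((a k)⁻¹ : Rˣ) : R) * (((a m)⁻¹ : Rˣ) : R))
    (hpa : ∀ m k, p m * (a k : R) - (a k : R) * p m
        = if m = k then -(algebraMap ℂ R Complex.I) * (a k : R) else 0)
    (hpainv : ∀ m k, m ≠ k → p m * (((a k)⁻¹ : Rˣ) : R) = (((a k)⁻¹ : Rˣ) : R) * p m)
    (L : Fin N → ℂ → Matrix (Fin 2) (Fin 2) R)
    (hL : ∀ m (u : ℂ),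
      L m u = !![algebraMap ℂ R u - p m, -(a m : R); (((a m)⁻¹ : Rˣ) : R), 0]) :
    ∀ u v : ℂ,
      ((1 : Matrix (Fin 2) (Fin 2) R) ⊗ₖ monodromy L v) *
          (monodromy L u ⊗ₖ (1 : Matrix (Fin 2) (Fin 2) R)) *
          (Rmat (u - v)).map (algebraMap ℂ R) =
        (Rmat (u - v)).map (algebraMap ℂ R) *
          (monodromy L u ⊗ₖ (1 : Matrix (Fin 2) (Fin 2) R)) *
          ((1 : Matrix (Fin 2) (Fin 2) R) ⊗ₖ monodromy L v) := by
  intro u v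
  -- commutation of entries at distinct sites
  have hcomm : ∀ m k : Fin N, m ≠ k → ∀ (w w' : ℂ) (i j s t : Fin 2),
      L m w i j * L k w' s t = L k w' s t * L m w i j := by
    intro m k hmk w w'
    have cq : ∀ (c : ℂ) (x : R), Commute (algebraMap ℂ R c) x := fun c x => Algebra.commutes c x
    have cpa : Commute (p m) ((a k : R)) := sub_eq_zero.mp (by rw [hpa m k, if_neg hmk])
    have cap : Commute ((a m : R)) (p k) :=
      (sub_eq_zero.mp (by rw [hpa k m, if_neg (Ne.symm hmk)])).symm
    have cpb : Commute (p m) (((a k)⁻¹ : Rˣ) : R) := hpainv m k hmk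
    have cbp : Commute (((a m)⁻¹ : Rˣ) : R) (p k) := (hpainv k m (Ne.symm hmk)).symm
    have c1 : Commute (algebraMap ℂ R w - p m) (algebraMap ℂ R w' - p k) :=
      (cq w _).sub_left (((cq w' (p m)).symm).sub_right (hpp m k))
    have c2 : Commute (algebraMap ℂ R w - p m) (-(a k : R)) :=
      ((cq w _).sub_left cpa).neg_right
    have c3 : Commute (algebraMap ℂ R w - p m) (((a k)⁻¹ : Rˣ) : R) :=
      (cq w _).sub_left cpb
    have c4 : Commute (-(a m : R)) (algebraMap ℂ R w' - p k) :=
      (((cq w' _).symm).sub_right cap).neg_left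
    have caa : Commute ((a m : R)) ((a k : R)) := haa m k
    have cab : Commute ((a m : R)) (((a k)⁻¹ : Rˣ) : R) := haainv m k
    have cba : Commute (((a m)⁻¹ : Rˣ) : R) ((a k : R)) := (haainv k m).symm
    have c5 : Commute (-(a m : R)) (-(a k : R)) := caa.neg_left.neg_right
    have c6 : Commute (-(a m : R)) (((a k)⁻¹ : Rˣ) : R) := cab.neg_left
    have c7 : Commute (((a m)⁻¹ : Rˣ) : R) (algebraMap ℂ R w' - p k) :=
      ((cq w' _).symm).sub_right cbp
    have c8 : Commute (((a m)⁻¹ : Rˣ) : R) (-(a k : R)) := cba.neg_right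
    have c9 : Commute (((a m)⁻¹ : Rˣ) : R) (((a k)⁻¹ : Rˣ) : R) := hainvinv m k
    simp only [hL, Fin.forall_fin_two, Matrix.of_apply, Matrix.cons_val', Matrix.cons_val_zero,
      Matrix.cons_val_one, Matrix.head_cons, Matrix.empty_val', Matrix.cons_val_fin_one,
      Matrix.head_fin_const, Fin.isValue]
    and_intros <;>
      first
        | trivial
        | exact (Commute.zero_left _).eq
        | exact (Commute.zero_right _).eq
        | exact c1.eq | exact c2.eq | exact c3.eq | exact c4.eq | exact c5.eq
        | exact c6.eq | exact c7.eq | exact c8.eq | exact c9.eq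
  set l : List (Matrix (Fin 2) (Fin 2) R × Matrix (Fin 2) (Fin 2) R) :=
    List.ofFn (fun m : Fin N => (L m u, L m v)) with hldef
  have hfst : l.map Prod.fst = List.ofFn (fun m : Fin N => L m u) := by
    rw [hldef, List.map_ofFn]; rfl
  have hsnd : l.map Prod.snd = List.ofFn (fun m : Fin N => L m v) := by
    rw [hldef, List.map_ofFn]; rfl
  have hmu : monodromy L u = (l.map Prod.fst).reverse.prod := by rw [hfst]; rfl
  have hmv : monodromy L v = (l.map Prod.snd).reverse.prod := by rw [hsnd]; rfl
  rw [hmu, hmv]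
  apply RTT_list (u - v) l
  · -- local RLL relation at each site
    intro x hx
    rw [hldef, List.mem_ofFn] at hx
    obtain ⟨m, rfl⟩ := hx
    have hPA : p m * (a m : R) - (a m : R) * p m
        = -(algebraMap ℂ R Complex.I) * (a m : R) := by
      have := hpa m m; rwa [if_pos rfl] at this
    simpa only [hL] using
      RLL_of_entries (L m u) (L m v) (u - v)
        (by
          rw [hL m u, hL m v]
          exact local_entries (p m) ((a m : R)) (((a m)⁻¹ : Rˣ) : R) u v
            (Units.mul_inv _) (Units.inv_mul _) hPA)
  · -- cross commutation for distinct sites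
    rw [hldef, List.pairwise_ofFn]
    intro m k hmk
    constructor
    · exact cross_comm _ _ (fun i j s t => hcomm m k (Fin.ne_of_lt hmk) v u i j s t)
    · exact cross_comm _ _ (fun i j s t => hcomm k m (Fin.ne_of_lt hmk).symm v u i j s t)
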